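/- Define C(n,k,x) := Σ_{j=0}^{min(n,k)} j! · (x+1)^{(j)} · S(n+1, j+1) · S(k+1, j+1) with C(n,0,x) = C(0,k,x) = 1. Then for all integers n ≥ 0 and k > 0, C(n,k,x) = (n+1)·C(n,k-1,x) + Σ_{j=1}^{n-1} binom(n, j-1)·C(j, k-1, x) + x·Σ_{j=0}^{n-1} binom(n, j)·C(j, k-1, x), as polynomials in x. -/

import Mathlib

open Finset

/-- Stirling numbers of the second kind. -/
def stirling2 : ℕ → ℕ → ℕ
  | 0, 0 => 1
  | 0, _ + 1 => 0
  | _ + 1, 0 => 0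
  | n + 1, k + 1 => (k + 1) * stirling2 n (k + 1) + stirling2 n k

/-- Unsigned Stirling numbers of the first kind. -/
def stirling1 : ℕ → ℕ → ℕ
  | 0, 0 => 1
  | 0, _ + 1 => 0
  | _ + 1, 0 => 0
  | n + 1, k + 1 => n * stirling1 n (k + 1) + stirling1 n k

/-- The Callan polynomial, evaluated at x : ℚ. -/
def callan (n k : ℕ) (x : ℚ) : ℚ :=
  ∑ j ∈ Finset.range (min n k + 1),
    (j.factorial : ℚ) * (∏ i ∈ Finset.range j, (x + 1 + i)) *
      stirling2 (n + 1) (j + 1) * stirling2 (k + 1) (j + 1)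

/-!
Extending the sum past `min n k` by vanishing terms, `callan n k x = ∑ₘ wₘ S(n+1, m+1) S(k+1, m+1)`
with `wₘ = m! (x+1)^{(m)}`. Expanding `S(k+2, ·)` by its recurrence and shifting the index writes both
sides of the recurrence as combinations of the `S(k+1, m+1)`, so it suffices to compare coefficients.
Since `wₘ₊₁ = (m+1)(x+m+1) wₘ`, each coefficient identity is affine in `x`, and both of its parts
follow from `∑_{j<n} C(n,j) S(j+1,c) = c S(n+1,c+1)`.
-/

namespace Nat

theorem sum_range_succ_choose_mul_stirlingSecond_succ (n c : ℕ) :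
    ∑ j ∈ range (n + 1), n.choose j * stirlingSecond (j + 1) c =
      c * stirlingSecond (n + 1) (c + 1) + stirlingSecond (n + 1) c := by
  induction n generalizing c with
  | zero => cases c <;> simp [stirlingSecond]
  | succ n ih =>
    have pascal := sum_choose_succ_mul (R := ℕ) (fun j _ => stirlingSecond (j + 1) c) n
    simp only [cast_id] at pascal
    rw [pascal, ih]
    cases c with
    | zero => simp
    | succ c =>
      simp only [stirlingSecond_succ_succ (_ + 1) c, mul_add, sum_add_distrib, mul_left_comm _ (c + 1),
        ← mul_sum, ih]
      rw [stirlingSecond_succ_succ (n + 1) (c + 1)]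
      ring

theorem sum_range_choose_mul_stirlingSecond_succ (n c : ℕ) :
    ∑ j ∈ range n, n.choose j * stirlingSecond (j + 1) c = c * stirlingSecond (n + 1) (c + 1) := by
  have h := sum_range_succ_choose_mul_stirlingSecond_succ n c
  rw [sum_range_succ, choose_self, one_mul] at h
  omega

theorem sum_Icc_choose_pred_mul_stirlingSecond_succ (n m : ℕ) :
    ∑ j ∈ Icc 1 (n - 1), n.choose (j - 1) * stirlingSecond (j + 1) (m + 1)
        + (n + 1) * stirlingSecond (n + 1) (m + 1)
      = (m + 1) * stirlingSecond (n + 1) (m + 1) + (m + 1) ^ 2 * stirlingSecond (n + 1) (m + 2) := by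
  cases n with
  | zero => cases m <;> simp [stirlingSecond_eq_zero_of_lt]
  | succ n =>
    have shift : ∑ j ∈ Icc 1 n, (n + 1).choose (j - 1) * stirlingSecond (j + 1) (m + 1)
        = (m + 1) * ∑ j ∈ range n, (n + 1).choose j * stirlingSecond (j + 1) (m + 1)
          + ∑ j ∈ range n, (n + 1).choose j * stirlingSecond (j + 1) m := by
      rw [← Ico_add_one_right_eq_Icc, sum_Ico_eq_sum_range, mul_sum, ← sum_add_distrib]
      refine sum_congr (by simp) fun j _ => ?_
      rw [add_tsub_cancel_left, add_comm 1 j, stirlingSecond_succ_succ]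
      ring
    have tail c := sum_range_choose_mul_stirlingSecond_succ (n + 1) c
    simp only [sum_range_succ, choose_succ_self_right] at tail
    rw [add_tsub_cancel_right, shift]
    linear_combination (m + 1) * tail (m + 1) + tail m + (n + 1) * stirlingSecond_succ_succ (n + 1) m

end Nat

section

open Nat

theorem stirling2_eq_stirlingSecond : stirling2 = Nat.stirlingSecond := by
  funext n k
  induction n generalizing k with
  | zero => cases k <;> rfl
  | succ n ih => cases k <;> simp [stirling2, stirlingSecond_succ_succ, ih]

def callanWeight (x : ℚ) (j : ℕ) : ℚ :=
  j.factorial * ∏ i ∈ range j, (x + 1 + i)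

theorem callanWeight_succ (x : ℚ) (j : ℕ) :
    callanWeight x (j + 1) = (j + 1) * (x + 1 + j) * callanWeight x j := by
  simp only [callanWeight, factorial_succ, prod_range_succ]
  push_cast
  ring

theorem callan_eq_sum_range {n M : ℕ} (k : ℕ) (x : ℚ) (hM : n < M) :
    callan n k x = ∑ j ∈ range M,
      callanWeight x j * stirlingSecond (n + 1) (j + 1) * stirlingSecond (k + 1) (j + 1) := by
  rw [callan, stirling2_eq_stirlingSecond]
  refine sum_subset (range_subset_range.mpr (by omega)) fun j _ hj => ?_
  have : n < j ∨ k < j := by simp only [mem_range] at hj; omega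
  rcases this with h | h <;> simp [stirlingSecond_eq_zero_of_lt (succ_lt_succ h)]

theorem callan_succ_right (n k : ℕ) (x : ℚ) :
    callan n (k + 1) x = ∑ m ∈ range (n + 1), stirlingSecond (k + 1) (m + 1) *
      ((m + 1) * callanWeight x m * stirlingSecond (n + 1) (m + 1)
        + callanWeight x (m + 1) * stirlingSecond (n + 1) (m + 2)) := by
  have shift : ∑ j ∈ range (n + 1),
      callanWeight x j * stirlingSecond (n + 1) (j + 1) * stirlingSecond (k + 1) j
      = ∑ m ∈ range (n + 1),
      callanWeight x (m + 1) * stirlingSecond (n + 1) (m + 2) * stirlingSecond (k + 1) (m + 1) := by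
    rw [sum_range_succ', sum_range_succ]
    simp [stirlingSecond_eq_zero_of_lt (show n + 1 < n + 2 by omega)]
  calc callan n (k + 1) x
      = ∑ j ∈ range (n + 1), ((j + 1) * callanWeight x j * stirlingSecond (n + 1) (j + 1)
          * stirlingSecond (k + 1) (j + 1)
          + callanWeight x j * stirlingSecond (n + 1) (j + 1) * stirlingSecond (k + 1) j) := by
        rw [callan_eq_sum_range (k + 1) x (lt_add_one n)]
        refine sum_congr rfl fun j _ => ?_
        rw [stirlingSecond_succ_succ (k + 1) j]
        push_cast
        ring
    _ = _ := by
        rw [sum_add_distrib, shift, ← sum_add_distrib]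
        refine sum_congr rfl fun m _ => ?_
        ring

theorem sum_mul_callan {M : ℕ} (s : Finset ℕ) (c : ℕ → ℚ) (k : ℕ) (x : ℚ) (hs : ∀ j ∈ s, j < M) :
    ∑ j ∈ s, c j * callan j k x = ∑ m ∈ range M, callanWeight x m * stirlingSecond (k + 1) (m + 1) *
      ∑ j ∈ s, c j * stirlingSecond (j + 1) (m + 1) := by
  rw [sum_congr rfl fun j hj => by rw [callan_eq_sum_range k x (hs j hj), mul_sum], sum_comm]
  refine sum_congr rfl fun m _ => ?_
  rw [mul_sum]
  exact sum_congr rfl fun j _ => by ring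

/-- The coefficients of `S(k+1, m+1)` on the two sides of the recurrence agree. -/
theorem callan_coeff_recurrence (n m : ℕ) (x : ℚ) :
    (m + 1) * callanWeight x m * stirlingSecond (n + 1) (m + 1)
        + callanWeight x (m + 1) * stirlingSecond (n + 1) (m + 2)
      = callanWeight x m * ((n + 1) * stirlingSecond (n + 1) (m + 1)
        + ∑ j ∈ Icc 1 (n - 1), (n.choose (j - 1) : ℚ) * stirlingSecond (j + 1) (m + 1)
        + x * ∑ j ∈ range n, (n.choose j : ℚ) * stirlingSecond (j + 1) (m + 1)) := by
  have coeff_x : ∑ j ∈ range n, (n.choose j : ℚ) * stirlingSecond (j + 1) (m + 1)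
      = (m + 1) * stirlingSecond (n + 1) (m + 2) := by
    exact_mod_cast sum_range_choose_mul_stirlingSecond_succ n (m + 1)
  have coeff_one : ∑ j ∈ Icc 1 (n - 1), (n.choose (j - 1) : ℚ) * stirlingSecond (j + 1) (m + 1)
        + (n + 1) * stirlingSecond (n + 1) (m + 1)
      = (m + 1) * stirlingSecond (n + 1) (m + 1) + (m + 1) ^ 2 * stirlingSecond (n + 1) (m + 2) := by
    exact_mod_cast sum_Icc_choose_pred_mul_stirlingSecond_succ n m
  rw [callanWeight_succ, coeff_x]
  linear_combination -callanWeight x m * coeff_one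

end

theorem stmt17 (n k : ℕ) (hk : 0 < k) (x : ℚ) :
    callan n k x =
      (n + 1) * callan n (k - 1) x
        + ∑ j ∈ Finset.Icc 1 (n - 1), (n.choose (j - 1) : ℚ) * callan j (k - 1) x
        + x * ∑ j ∈ Finset.range n, (n.choose j : ℚ) * callan j (k - 1) x := by
  obtain ⟨k, rfl⟩ : ∃ k', k = k' + 1 := ⟨k - 1, by omega⟩
  have hIcc : ∀ j ∈ Icc 1 (n - 1), j < n + 1 := fun j hj => by grind
  have hrange : ∀ j ∈ range n, j < n + 1 := fun j hj => by grind
  rw [Nat.add_sub_cancel, callan_succ_right, callan_eq_sum_range k x (lt_add_one n),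
    sum_mul_callan _ _ k x hIcc, sum_mul_callan _ _ k x hrange, mul_sum, mul_sum,
    ← sum_add_distrib, ← sum_add_distrib]
  refine sum_congr rfl fun m _ => ?_
  rw [callan_coeff_recurrence]
  ring
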